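/- Every module over a ring R is a filtered colimit of finitely presented R-modules. In particular, every flat R-module is a filtered colimit of finitely generated free R-modules (Lazard's theorem). -/

import Mathlib

open CategoryTheory CategoryTheory.Limits

universe u

/-- A presentation of a module `M` as a filtered colimit of a diagram of modules. -/
structure FilteredColimitPresentation (R : Type u) [Ring R] (M : ModuleCat.{u} R) where
  /-- the filtered index category -/
  J : Type u
  [cat : SmallCategory J]
  filtered : IsFiltered J
  /-- the diagram -/
  F : J ⥤ ModuleCat.{u} R
  /-- `M` is the colimit of the diagram -/
  iso : colimit F ≅ M

attribute [instance] FilteredColimitPresentation.cat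

/-!
Let `J` be the category of pairs `(i, f)` with `f : X i →ₗ M`, for a small family of finite
modules `X i` closed under binary products up to isomorphism and containing `R`. If every
finitely generated submodule of `ker f` dies along some morphism out of `(i, f)`, then `J` is
filtered (to coequalize `g₁, g₂ : (i, f) ⟶ (j, h)`, kill the range of `g₁ - g₂ ⊆ ker h`) and
the tautological cocone is a colimit (`x ∈ M` comes from `(R, r ↦ r • x)`, and an element of
`ker f` dies in `J`). For finitely presented `X i` the dying is automatic, since `X i ⧸ S` is
again finitely presented; for finite free `X i` it is the equational criterion for flatness.
-/

section

variable {R : Type u} [Ring R]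

structure FamilyOver {ι : Type u} (X : ι → Type u) [∀ i, AddCommGroup (X i)]
    [∀ i, Module R (X i)] (M : ModuleCat.{u} R) : Type u where
  idx : ι
  map : X idx →ₗ[R] M

namespace FamilyOver

variable {ι : Type u} {X : ι → Type u} [∀ i, AddCommGroup (X i)] [∀ i, Module R (X i)]
  {M : ModuleCat.{u} R}

instance : SmallCategory (FamilyOver X M) where
  Hom A B := {g : X A.idx →ₗ[R] X B.idx // B.map ∘ₗ g = A.map}
  id A := ⟨LinearMap.id, LinearMap.comp_id _⟩
  comp g h := ⟨h.1 ∘ₗ g.1, by rw [← LinearMap.comp_assoc, h.2, g.2]⟩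

theorem comp_val {A B C : FamilyOver X M} (g : A ⟶ B) (h : B ⟶ C) :
    (g ≫ h).1 = h.1 ∘ₗ g.1 :=
  rfl

variable (X M)

noncomputable def diagram : FamilyOver X M ⥤ ModuleCat.{u} R where
  obj A := ModuleCat.of R (X A.idx)
  map g := ModuleCat.ofHom g.1

noncomputable def cocone : Cocone (diagram X M) where
  pt := M
  ι.app A := ModuleCat.ofHom A.map
  ι.naturality _ _ g := by
    simpa using ModuleCat.hom_ext g.2

def KillsKernels : Prop :=
  ∀ (A : FamilyOver X M) (S : Submodule R (X A.idx)), S.FG → S ≤ LinearMap.ker A.map →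
    ∃ (B : FamilyOver X M) (g : A ⟶ B), S ≤ LinearMap.ker g.1

variable {X M}

theorem isFiltered [Nonempty ι] [∀ i, Module.Finite R (X i)]
    (hprod : ∀ i j, ∃ k, Nonempty (X k ≃ₗ[R] X i × X j)) (hkill : KillsKernels X M) :
    IsFiltered (FamilyOver X M) where
  nonempty := ⟨⟨Classical.arbitrary ι, 0⟩⟩
  cocone_objs A B := by
    obtain ⟨k, ⟨e⟩⟩ := hprod A.idx B.idx
    refine ⟨⟨k, A.map.coprod B.map ∘ₗ e.toLinearMap⟩,
      ⟨e.symm.toLinearMap ∘ₗ LinearMap.inl R _ _, ?_⟩,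
      ⟨e.symm.toLinearMap ∘ₗ LinearMap.inr R _ _, ?_⟩, trivial⟩ <;>
    · ext; simp
  cocone_maps A B g₁ g₂ := by
    have hfg : (LinearMap.range (g₁.1 - g₂.1)).FG :=
      LinearMap.range_eq_map (g₁.1 - g₂.1) ▸ Module.Finite.fg_top.map _
    have hker : LinearMap.range (g₁.1 - g₂.1) ≤ LinearMap.ker B.map := by
      rw [LinearMap.range_le_ker_iff, LinearMap.comp_sub, g₁.2, g₂.2, sub_self]
    obtain ⟨C, h, hh⟩ := hkill B _ hfg hker
    refine ⟨C, h, Subtype.ext ?_⟩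
    rw [comp_val, comp_val, ← sub_eq_zero, ← LinearMap.comp_sub,
      ← LinearMap.range_le_ker_iff]
    exact hh

theorem bijective_colimitDesc [IsFiltered (FamilyOver X M)] {i₀ : ι} (e : X i₀ ≃ₗ[R] R)
    (hkill : KillsKernels X M) :
    Function.Bijective (colimit.desc (diagram X M) (cocone X M)) := by
  constructor
  · rw [injective_iff_map_eq_zero]
    intro z hz
    obtain ⟨A, y, rfl⟩ := Concrete.colimit_exists_rep (diagram X M) z
    have hy : A.map y = 0 :=
      (ConcreteCategory.congr_hom (colimit.ι_desc (cocone X M) A) y).symm.trans hz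
    obtain ⟨B, g, hg⟩ := hkill A _ (Submodule.fg_span_singleton y)
      ((Submodule.span_singleton_le_iff_mem _ _).mpr hy)
    calc colimit.ι (diagram X M) A y
        = colimit.ι (diagram X M) B (g.1 y) :=
          (ConcreteCategory.congr_hom (colimit.w (diagram X M) g) y).symm
      _ = 0 := by
        rw [hg (Submodule.mem_span_singleton_self y)]
        exact map_zero (colimit.ι (diagram X M) B).hom
  · intro x
    let A : FamilyOver X M := ⟨i₀, LinearMap.toSpanSingleton R M x ∘ₗ e.toLinearMap⟩
    refine ⟨colimit.ι (diagram X M) A (e.symm 1),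
      (ConcreteCategory.congr_hom (colimit.ι_desc (cocone X M) A) (e.symm 1)).trans ?_⟩
    change LinearMap.toSpanSingleton R M x (e (e.symm 1)) = x
    rw [e.apply_symm_apply]
    exact one_smul R x

variable (X M) in
noncomputable def presentation [Nonempty ι] [∀ i, Module.Finite R (X i)]
    (hprod : ∀ i j, ∃ k, Nonempty (X k ≃ₗ[R] X i × X j)) {i₀ : ι} (e : X i₀ ≃ₗ[R] R)
    (hkill : KillsKernels X M) : FilteredColimitPresentation R M :=
  haveI := isFiltered hprod hkill
  { J := FamilyOver X M
    filtered := this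
    F := diagram X M
    iso := (LinearEquiv.ofBijective _ (bijective_colimitDesc e hkill)).toModuleIso }

end FamilyOver

-- Every finitely presented module is isomorphic to some `R^n ⧸ K`; indexing by the pairs
-- `(n, K)` keeps the index category small.
variable (R) in
abbrev FinPresIndex : Type u := Σ n : ℕ, {K : Submodule R (Fin n → R) // K.FG}

abbrev FinPresIndex.carrier (i : FinPresIndex R) : Type u := (Fin i.1 → R) ⧸ i.2.1

instance (i : FinPresIndex R) : Module.FinitePresentation R i.carrier :=
  Module.finitePresentation_of_surjective _ (Submodule.mkQ_surjective _)
    ((Submodule.ker_mkQ i.2.1).symm ▸ i.2.2)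

instance : Nonempty (FinPresIndex R) := ⟨⟨0, ⊥, Submodule.fg_bot⟩⟩

variable (R) in
theorem FinPresIndex.exists_linearEquiv (N : Type*) [AddCommGroup N] [Module R N]
    [Module.FinitePresentation R N] : ∃ i : FinPresIndex R, Nonempty (i.carrier ≃ₗ[R] N) :=
  have ⟨n, K, e, hK⟩ := Module.FinitePresentation.exists_fin R N
  ⟨⟨n, K, hK⟩, ⟨e.symm⟩⟩

theorem FinPresIndex.killsKernels (M : ModuleCat.{u} R) :
    FamilyOver.KillsKernels (FinPresIndex.carrier (R := R)) M := by
  intro A S hS hker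
  have : Module.FinitePresentation R (A.idx.carrier ⧸ S) :=
    Module.finitePresentation_of_surjective _ S.mkQ_surjective (S.ker_mkQ.symm ▸ hS)
  obtain ⟨k, ⟨e⟩⟩ := FinPresIndex.exists_linearEquiv R (A.idx.carrier ⧸ S)
  refine ⟨⟨k, S.liftQ A.map hker ∘ₗ e.toLinearMap⟩, ⟨e.symm.toLinearMap ∘ₗ S.mkQ, ?_⟩, ?_⟩
  · ext; simp
  · rw [LinearEquiv.ker_comp, Submodule.ker_mkQ]

theorem exists_filteredColimitPresentation_finitePresentation (M : ModuleCat.{u} R) :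
    ∃ P : FilteredColimitPresentation R M, ∀ j, Module.FinitePresentation R (P.F.obj j) := by
  obtain ⟨i₀, ⟨e⟩⟩ := FinPresIndex.exists_linearEquiv R R
  exact ⟨FamilyOver.presentation FinPresIndex.carrier M
      (fun i j => FinPresIndex.exists_linearEquiv R _) e (FinPresIndex.killsKernels M),
    fun j => inferInstanceAs (Module.FinitePresentation R j.idx.carrier)⟩

end

section

variable {R : Type u} [CommRing R]

theorem FamilyOver.killsKernels_of_flat (M : ModuleCat.{u} R) [Module.Flat R M] :
    KillsKernels (fun n : ULift.{u} ℕ => Fin n.down →₀ R) M := by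
  intro A S hS hker
  have : Module.Finite R S := Module.Finite.iff_fg.mpr hS
  have hS0 : A.map ∘ₗ S.subtype = 0 := by
    rwa [← LinearMap.range_le_ker_iff, Submodule.range_subtype]
  obtain ⟨k, a, y, hya, haS⟩ :=
    Module.Flat.exists_factorization_of_comp_eq_zero_of_free (K := S) hS0
  refine ⟨⟨k, y⟩, ⟨a, hya.symm⟩, ?_⟩
  rwa [← LinearMap.range_le_ker_iff, Submodule.range_subtype] at haS

theorem Module.Flat.exists_filteredColimitPresentation_finite_free (M : ModuleCat.{u} R)
    [Module.Flat R M] :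
    ∃ P : FilteredColimitPresentation R M,
      ∀ j, Module.Finite R (P.F.obj j) ∧ Module.Free R (P.F.obj j) := by
  have hprod (n m : ULift.{u} ℕ) : ∃ k : ULift.{u} ℕ,
      Nonempty ((Fin k.down →₀ R) ≃ₗ[R] (Fin n.down →₀ R) × (Fin m.down →₀ R)) :=
    ⟨⟨n.down + m.down⟩, ⟨(Finsupp.domLCongr finSumFinEquiv.symm).trans
      (Finsupp.sumFinsuppLEquivProdFinsupp R)⟩⟩
  exact ⟨FamilyOver.presentation (fun n : ULift.{u} ℕ => Fin n.down →₀ R) M hprod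
    (i₀ := ⟨1⟩) (Finsupp.uniqueLinearEquiv R R 0) (FamilyOver.killsKernels_of_flat M),
    fun j => ⟨inferInstanceAs (Module.Finite R (Fin j.idx.down →₀ R)),
      inferInstanceAs (Module.Free R (Fin j.idx.down →₀ R))⟩⟩

end

/-- Every module is a filtered colimit of finitely presented modules; and every flat
module is a filtered colimit of finitely generated free modules (Lazard). -/
theorem lazard (R : Type u) [CommRing R] (M : ModuleCat.{u} R) :
    (∃ P : FilteredColimitPresentation R M,
        ∀ j, Module.FinitePresentation R (P.F.obj j)) ∧
      (Module.Flat R M →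
        ∃ P : FilteredColimitPresentation R M,
          ∀ j, Module.Finite R (P.F.obj j) ∧ Module.Free R (P.F.obj j)) :=
  ⟨exists_filteredColimitPresentation_finitePresentation M,
    fun _ => Module.Flat.exists_filteredColimitPresentation_finite_free M⟩
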